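/- arXiv:2503.17288 — 5 statements merged into one kernel-verified Lean document; each statement's English description precedes it below -/
import Mathlib

section
/- Let M be a symmetric positive semidefinite N×N matrix and α, γ > 0. Any optimal solution G⋆ of the convex SDP: minimize −½ log det(I + αG) + (γ/2)Tr(GM) subject to G ⪰ 0 and Tr(G) = N, commutes with M (i.e., G⋆M = MG⋆), so G⋆ and M are simultaneously diagonalizable by an orthogonal matrix. -/
/-!
Conjugating `G⋆` by an orthogonal matrix `Q` changes neither feasibility nor
`det (1 + α G)`, so optimality forces `Tr (G⋆ M) ≤ Tr (Q G⋆ Qᵀ M)` for every such `Q`.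
Along the orthogonal path `Q t = exp (t A)` with the skew-symmetric `A = M G⋆ - G⋆ M`, the
derivative of `t ↦ Tr (Q t G⋆ (Q t)ᵀ M)` at `0` is `Tr (Aᵀ A)`, which must vanish; hence `A = 0`.
Commuting symmetric matrices then share an orthonormal eigenbasis.
-/

open Matrix Module.End NormedSpace

namespace LinearMap.IsSymmetric

variable {𝕜 E : Type*} [RCLike 𝕜] [NormedAddCommGroup E] [InnerProductSpace 𝕜 E]
  [FiniteDimensional 𝕜 E] {A B : E →ₗ[𝕜] E}

theorem exists_orthonormalBasis_eigenvectors_of_commute (hA : A.IsSymmetric)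
    (hB : B.IsSymmetric) (hAB : Commute A B) {ι : Type*} [Fintype ι]
    (hι : Module.finrank 𝕜 E = Fintype.card ι) :
    ∃ (b : OrthonormalBasis ι 𝕜 E) (d e : ι → 𝕜),
      ∀ i, A (b i) = d i • b i ∧ B (b i) = e i • b i := by
  classical
  have hV := directSum_isInternal_of_commute hA hB hAB
  let := hV.submodule_iSupIndep.fintypeNeBotOfFiniteDimensional
  have hW := DirectSum.isInternal_ne_bot_iff.mpr hV
  have hW' := (orthogonalFamily_eigenspace_inf_eigenspace hA hB).comp
    (Subtype.val_injective (p := fun i : 𝕜 × 𝕜 => eigenspace A i.2 ⊓ eigenspace B i.1 ≠ ⊥))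
  let σ := Fintype.equivFin ι
  let p i := (hW.subordinateOrthonormalBasisIndex hι (σ i) hW').val
  refine ⟨(hW.subordinateOrthonormalBasis hι hW').reindex σ.symm, fun i => (p i).2,
    fun i => (p i).1, fun i => ?_⟩
  obtain ⟨hAi, hBi⟩ := hW.subordinateOrthonormalBasis_subordinate hι (σ i) hW'
  rw [OrthonormalBasis.reindex_apply, σ.symm_symm]
  exact ⟨mem_eigenspace_iff.mp hAi, mem_eigenspace_iff.mp hBi⟩

end LinearMap.IsSymmetric

namespace Matrix

variable {n : Type*} [Fintype n] [DecidableEq n]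

section OrthogonalConj

variable {R : Type*} [CommRing R] {Q : Matrix n n R}

theorem trace_orthogonal_conj (hQ : Q ∈ orthogonalGroup n R) (X : Matrix n n R) :
    trace (Q * X * Qᵀ) = trace X := by
  rw [trace_mul_cycle, (mem_orthogonalGroup_iff' n R).mp hQ, one_mul]

theorem det_orthogonal_conj (hQ : Q ∈ orthogonalGroup n R) (X : Matrix n n R) :
    det (Q * X * Qᵀ) = det X := by
  rw [det_mul, det_mul, mul_right_comm, ← det_mul, (mem_orthogonalGroup_iff n R).mp hQ, det_one,
    one_mul]

theorem det_one_add_smul_orthogonal_conj (hQ : Q ∈ orthogonalGroup n R) (c : R)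
    (X : Matrix n n R) : det (1 + c • (Q * X * Qᵀ)) = det (1 + c • X) := by
  have hconj : 1 + c • (Q * X * Qᵀ) = Q * (1 + c • X) * Qᵀ := by
    rw [mul_add, add_mul, mul_one, (mem_orthogonalGroup_iff n R).mp hQ, mul_smul_comm,
      smul_mul_assoc]
  rw [hconj, det_orthogonal_conj hQ]

end OrthogonalConj

theorem exp_mem_orthogonalGroup {A : Matrix n n ℝ} (hA : Aᵀ = -A) :
    exp A ∈ orthogonalGroup n ℝ := by
  rw [mem_orthogonalGroup_iff, ← exp_transpose, hA, exp_neg,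
    mul_nonsing_inv _ ((isUnit_iff_isUnit_det _).mp (isUnit_exp A))]

section Derivative

attribute [local instance] Matrix.linftyOpNormedRing Matrix.linftyOpNormedAlgebra

theorem hasDerivAt_trace_exp_smul_mul_mul_transpose (A G M : Matrix n n ℝ) :
    HasDerivAt (fun t : ℝ => trace (exp (t • A) * G * (exp (t • A))ᵀ * M))
      (trace ((A * G + G * Aᵀ) * M)) 0 := by
  have hexp (B : Matrix n n ℝ) : HasDerivAt (fun t : ℝ => exp (t • B)) B 0 := by
    have h := hasDerivAt_exp_smul_const (𝕂 := ℝ) B 0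
    rw [zero_smul, exp_zero, one_mul] at h
    exact h
  have hprod := (((hexp A).mul_const G).mul (hexp Aᵀ)).mul_const M
  simp only [zero_smul, exp_zero, one_mul, mul_one] at hprod
  simp_rw [← exp_transpose, transpose_smul]
  exact (traceLinearMap n ℝ ℝ).toContinuousLinearMap.hasFDerivAt.comp_hasDerivAt 0 hprod

end Derivative

theorem commute_of_forall_trace_mul_le_orthogonal_conj {G M : Matrix n n ℝ} (hG : G.IsSymm)
    (hM : M.IsSymm) (hmin : ∀ Q ∈ orthogonalGroup n ℝ, trace (G * M) ≤ trace (Q * G * Qᵀ * M)) :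
    Commute G M := by
  set A := M * G - G * M
  have hA : Aᵀ = -A := by
    rw [transpose_sub, transpose_mul, transpose_mul, hG.eq, hM.eq, neg_sub]
  have hlocalMin : IsLocalMin (fun t : ℝ => trace (exp (t • A) * G * (exp (t • A))ᵀ * M)) 0 :=
    Filter.Eventually.of_forall fun t => by
      simpa using hmin _ (exp_mem_orthogonalGroup (by rw [transpose_smul, hA, smul_neg]))
  have hderiv := hlocalMin.hasDerivAt_eq_zero (hasDerivAt_trace_exp_smul_mul_mul_transpose A G M)
  have htrace : trace ((A * G + G * Aᵀ) * M) = trace (Aᵀ * A) := by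
    have hGM : G * M - M * G = -A := (neg_sub _ _).symm
    calc trace ((A * G + G * Aᵀ) * M) = trace (A * (G * M)) - trace (M * G * A) := by
          rw [hA, mul_neg, ← sub_eq_add_neg, sub_mul, trace_sub, mul_assoc, trace_mul_cycle]
      _ = trace (A * (G * M - M * G)) := by rw [trace_mul_comm (M * G), ← trace_sub, ← mul_sub]
      _ = trace (Aᵀ * A) := by rw [hGM, hA, mul_neg, neg_mul]
  have hA0 : A = 0 := by
    rw [← trace_conjTranspose_mul_self_eq_zero_iff, conjTranspose_eq_transpose_of_trivial,
      ← htrace, hderiv]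
  exact (sub_eq_zero.mp hA0).symm

theorem isDiag_transpose_mul_mul_of_mul_eq_mul_diagonal {R : Type*} [CommRing R]
    {U A : Matrix n n R} {d : n → R} (hU : Uᵀ * U = 1) (hAU : A * U = U * diagonal d) :
    (Uᵀ * A * U).IsDiag := by
  rw [mul_assoc, hAU, ← mul_assoc, hU, one_mul]
  exact isDiag_diagonal d

theorem exists_orthogonal_isDiag_of_commute {A B : Matrix n n ℝ} (hA : A.IsHermitian)
    (hB : B.IsHermitian) (hAB : A * B = B * A) :
    ∃ U : Matrix n n ℝ, Uᵀ * U = 1 ∧ (Uᵀ * A * U).IsDiag ∧ (Uᵀ * B * U).IsDiag := by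
  have hcomm : Commute (toEuclideanLin A) (toEuclideanLin B) := by
    rw [commute_iff_eq]
    simpa only [toLpLin_mul_same, ← Module.End.mul_eq_comp] using congrArg toEuclideanLin hAB
  obtain ⟨b, d, e, hb⟩ :=
    (isSymmetric_toEuclideanLin_iff.mpr hA).exists_orthonormalBasis_eigenvectors_of_commute
      (isSymmetric_toEuclideanLin_iff.mpr hB) hcomm finrank_euclideanSpace
  set U := (EuclideanSpace.basisFun n ℝ).toBasis.toMatrix b.toBasis
  have hU : Uᵀ * U = 1 := by
    rw [← conjTranspose_eq_transpose_of_trivial]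
    exact (EuclideanSpace.basisFun n ℝ).toMatrix_orthonormalBasis_conjTranspose_mul_self b
  have hcols {C : Matrix n n ℝ} {c : n → ℝ} (hC : ∀ j, toEuclideanLin C (b j) = c j • b j) :
      C * U = U * diagonal c := by
    ext i j
    have := congr(WithLp.ofLp $(hC j) i)
    rw [mul_diagonal]
    simpa [U, Module.Basis.toMatrix_apply, Matrix.mul_apply, mulVec, dotProduct, mul_comm]
      using this
  exact ⟨U, hU, isDiag_transpose_mul_mul_of_mul_eq_mul_diagonal hU (hcols fun j => (hb j).1),
    isDiag_transpose_mul_mul_of_mul_eq_mul_diagonal hU (hcols fun j => (hb j).2)⟩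

end Matrix

theorem sdp_optimal_commutes_with_M_general (N : ℕ)
    (M : Matrix (Fin N) (Fin N) ℝ) (hM : M.PosSemidef)
    (α γ : ℝ) (hγ : 0 < γ)
    (Gs : Matrix (Fin N) (Fin N) ℝ)
    (hGs : Gs.PosSemidef) (htr : Matrix.trace Gs = (N : ℝ))
    (hopt : ∀ G : Matrix (Fin N) (Fin N) ℝ, G.PosSemidef →
      Matrix.trace G = (N : ℝ) →
      -(1/2) * Real.log ((1 + α • Gs).det) + (γ/2) * Matrix.trace (Gs * M) ≤
        -(1/2) * Real.log ((1 + α • G).det) + (γ/2) * Matrix.trace (G * M)) :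
    Gs * M = M * Gs ∧
      ∃ U : Matrix (Fin N) (Fin N) ℝ, Uᵀ * U = 1 ∧
        (Uᵀ * Gs * U).IsDiag ∧ (Uᵀ * M * U).IsDiag := by
  have hconj : ∀ Q ∈ orthogonalGroup (Fin N) ℝ, trace (Gs * M) ≤ trace (Q * Gs * Qᵀ * M) := by
    intro Q hQ
    have hQGs : (Q * Gs * Qᵀ).PosSemidef := by
      simpa only [conjTranspose_eq_transpose_of_trivial] using hGs.mul_mul_conjTranspose_same Q
    have h := hopt _ hQGs (by rw [trace_orthogonal_conj hQ, htr])
    rw [det_one_add_smul_orthogonal_conj hQ] at h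
    exact le_of_mul_le_mul_left (le_of_add_le_add_left h) (half_pos hγ)
  have hcomm : Gs * M = M * Gs := commute_of_forall_trace_mul_le_orthogonal_conj
    (isHermitian_iff_isSymm.mp hGs.isHermitian) (isHermitian_iff_isSymm.mp hM.isHermitian) hconj
  exact ⟨hcomm, exists_orthogonal_isDiag_of_commute hGs.isHermitian hM.isHermitian hcomm⟩

/-- Any optimal solution `G⋆` of the SDP
`min −½ log det(I + αG) + (γ/2) Tr(GM)  s.t.  G ⪰ 0, Tr(G) = N`
commutes with `M`, hence is simultaneously diagonalizable with `M` by an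
orthogonal matrix. -/
theorem sdp_optimal_commutes_with_M (N : ℕ)
    (M : Matrix (Fin N) (Fin N) ℝ) (hM : M.PosSemidef)
    (α γ : ℝ) (hα : 0 < α) (hγ : 0 < γ)
    (Gs : Matrix (Fin N) (Fin N) ℝ)
    (hGs : Gs.PosSemidef) (htr : Matrix.trace Gs = (N : ℝ))
    (hopt : ∀ G : Matrix (Fin N) (Fin N) ℝ, G.PosSemidef →
      Matrix.trace G = (N : ℝ) →
      -(1/2) * Real.log ((1 + α • Gs).det) + (γ/2) * Matrix.trace (Gs * M) ≤
        -(1/2) * Real.log ((1 + α • G).det) + (γ/2) * Matrix.trace (G * M)) :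
    Gs * M = M * Gs ∧
      ∃ U : Matrix (Fin N) (Fin N) ℝ, Uᵀ * U = 1 ∧
        (Uᵀ * Gs * U).IsDiag ∧ (Uᵀ * M * U).IsDiag :=
  sdp_optimal_commutes_with_M_general N M hM α γ hγ Gs hGs htr hopt
end

section
/- Consider minimizing f(λ₁,…,λ_m) = Σᵢ [−½ log(1 + αλᵢ) + (γ/2) μᵢ λᵢ] over λᵢ ≥ 0 with Σᵢ λᵢ = N, where α, γ > 0 and μᵢ ≥ 0 are given. The unique minimizer satisfies λᵢ⋆ = max{0, 1/(ν⋆ + γμᵢ) − 1/α} for every i, where ν⋆ is the (unique) real number for which Σᵢ max{0, 1/(ν⋆ + γμᵢ) − 1/α} = N. -/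
open Finset

/-- Key strict inequality: `s = max 0 (1/p - 1/α)` is the unique minimizer of
`x ↦ p*x - log(1+α*x)` on `[0,∞)`. -/
lemma rwf_key_lt (α p t : ℝ) (hα : 0 < α) (hp : 0 < p) (ht : 0 ≤ t)
    (hne : t ≠ max 0 (1/p - 1/α)) :
    p * max 0 (1/p - 1/α) - Real.log (1 + α * max 0 (1/p - 1/α))
      < p * t - Real.log (1 + α * t) := by
  set s := max 0 (1/p - 1/α) with hs_def
  have hs : 0 ≤ s := le_max_left _ _
  have h1s : (0:ℝ) < 1 + α * s := by nlinarith
  have h1t : (0:ℝ) < 1 + α * t := by nlinarith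
  have hne' : (1 + α*t)/(1+α*s) ≠ 1 := by
    intro hcontra
    rw [div_eq_iff h1s.ne', one_mul] at hcontra
    apply hne
    have hats : α * t = α * s := by linarith
    exact mul_left_cancel₀ hα.ne' hats
  have hlog := Real.log_lt_sub_one_of_pos (div_pos h1t h1s) hne'
  rw [Real.log_div h1t.ne' h1s.ne'] at hlog
  have hdiv : (1+α*t)/(1+α*s) - 1 = α*(t-s)/(1+α*s) := by
    field_simp
    ring
  rw [hdiv] at hlog
  have hfin : α*(t-s)/(1+α*s) ≤ p*(t-s) := by
    rcases le_or_gt (1/p - 1/α) 0 with h | h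
    · have hs0 : s = 0 := max_eq_left h
      have hap : α ≤ p := by
        rw [sub_nonpos] at h
        have := (div_le_div_iff₀ hp hα).mp h
        linarith
      have h1 : (1:ℝ) + α*0 = 1 := by ring
      rw [hs0, h1, div_one]
      nlinarith
    · have hs1 : s = 1/p - 1/α := max_eq_right h.le
      have h1as : 1 + α*s = α/p := by
        rw [hs1]; field_simp; ring
      rw [h1as]
      have heq : α*(t-s)/(α/p) = p*(t-s) := by
        field_simp
      rw [heq]
  linarith

lemma rwf_key_le (α p t : ℝ) (hα : 0 < α) (hp : 0 < p) (ht : 0 ≤ t) :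
    p * max 0 (1/p - 1/α) - Real.log (1 + α * max 0 (1/p - 1/α))
      ≤ p * t - Real.log (1 + α * t) := by
  rcases eq_or_ne t (max 0 (1/p - 1/α)) with h | h
  · rw [h]
  · exact (rwf_key_lt α p t hα hp ht h).le

/-- Reverse water-filling: the unique minimizer of
`Σᵢ [−½ log(1+αλᵢ) + (γ/2)μᵢλᵢ]` over `λᵢ ≥ 0`, `Σᵢ λᵢ = N` is
`λᵢ⋆ = max{0, 1/(ν⋆+γμᵢ) − 1/α}` where `ν⋆` satisfies
`Σᵢ max{0, 1/(ν⋆+γμᵢ) − 1/α} = N`. -/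
theorem reverse_water_filling_minimizer (d N : ℕ) (α γ : ℝ)
    (hα : 0 < α) (hγ : 0 < γ)
    (μ : Fin (min d N) → ℝ) (hμ : ∀ i, 0 ≤ μ i)
    (ν : ℝ) (hν : ∀ i, 0 < ν + γ * μ i)
    (hsum : ∑ i, max 0 (1 / (ν + γ * μ i) - 1 / α) = (N : ℝ)) :
    (∀ i, 0 ≤ max 0 (1 / (ν + γ * μ i) - 1 / α)) ∧
    (∀ l : Fin (min d N) → ℝ, (∀ i, 0 ≤ l i) → ∑ i, l i = (N : ℝ) →
        ∑ i, (-(1/2) * Real.log (1 + α * max 0 (1 / (ν + γ * μ i) - 1 / α))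
              + (γ/2) * μ i * max 0 (1 / (ν + γ * μ i) - 1 / α)) ≤
          ∑ i, (-(1/2) * Real.log (1 + α * l i) + (γ/2) * μ i * l i)) ∧
    (∀ l : Fin (min d N) → ℝ, (∀ i, 0 ≤ l i) → ∑ i, l i = (N : ℝ) →
        (∑ i, (-(1/2) * Real.log (1 + α * l i) + (γ/2) * μ i * l i) =
          ∑ i, (-(1/2) * Real.log (1 + α * max 0 (1 / (ν + γ * μ i) - 1 / α))
              + (γ/2) * μ i * max 0 (1 / (ν + γ * μ i) - 1 / α))) →
        l = fun i => max 0 (1 / (ν + γ * μ i) - 1 / α)) := by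
  set s : Fin (min d N) → ℝ := fun i => max 0 (1 / (ν + γ * μ i) - 1 / α) with hs_def
  -- rewrite each objective term:  g_i(x) = ½(p_i x − log(1+αx)) − (ν/2) x
  have hterm : ∀ (i : Fin (min d N)) (x : ℝ),
      -(1/2) * Real.log (1 + α * x) + (γ/2) * μ i * x
        = (1/2) * ((ν + γ * μ i) * x - Real.log (1 + α * x)) - (ν/2) * x := by
    intro i x; ring
  have hsum_rw : ∀ (x : Fin (min d N) → ℝ),
      ∑ i, (-(1/2) * Real.log (1 + α * x i) + (γ/2) * μ i * x i)
        = (∑ i, (1/2) * ((ν + γ * μ i) * x i - Real.log (1 + α * x i)))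
          - (ν/2) * ∑ i, x i := by
    intro x
    rw [Finset.mul_sum, ← Finset.sum_sub_distrib]
    exact Finset.sum_congr rfl fun i _ => hterm i (x i)
  refine ⟨fun i => le_max_left _ _, ?_, ?_⟩
  · intro l hl hlsum
    rw [hsum_rw l, hsum_rw s, hsum, hlsum]
    have : ∀ i ∈ Finset.univ,
        (1/2) * ((ν + γ * μ i) * s i - Real.log (1 + α * s i))
          ≤ (1/2) * ((ν + γ * μ i) * l i - Real.log (1 + α * l i)) := by
      intro i _
      have := rwf_key_le α (ν + γ * μ i) (l i) hα (hν i) (hl i)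
      linarith
    linarith [Finset.sum_le_sum this]
  · intro l hl hlsum heq
    rw [hsum_rw l, hsum_rw s, hsum, hlsum] at heq
    have heq' : (∑ i, (1/2) * ((ν + γ * μ i) * s i - Real.log (1 + α * s i)))
        = ∑ i, (1/2) * ((ν + γ * μ i) * l i - Real.log (1 + α * l i)) := by
      linarith
    have hle : ∀ i ∈ Finset.univ,
        (1/2) * ((ν + γ * μ i) * s i - Real.log (1 + α * s i))
          ≤ (1/2) * ((ν + γ * μ i) * l i - Real.log (1 + α * l i)) := by
      intro i _
      have := rwf_key_le α (ν + γ * μ i) (l i) hα (hν i) (hl i)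
      linarith
    have hpt := (Finset.sum_eq_sum_iff_of_le hle).mp heq'
    funext i
    by_contra hne
    have := rwf_key_lt α (ν + γ * μ i) (l i) hα (hν i) (hl i) hne
    have h2 := hpt i (Finset.mem_univ i)
    simp only [hs_def] at h2 this
    linarith
end

section
/- In the setting of the reverse water-filling problem (minimize Σᵢ [−½ log(1 + αλᵢ) + (γ/2)μᵢλᵢ] over λᵢ ≥ 0, Σᵢ₌₁^m λᵢ = N with α,γ > 0, μᵢ ≥ 0), if γ · max_i μᵢ < α − ν⋆ where ν⋆ is the optimal dual variable, then every λᵢ⋆ = 1/(ν⋆ + γμᵢ) − 1/α > 0; in particular all m components of the minimizer are strictly positive. -/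
open Finset

/-- If `γ · maxᵢ μᵢ < α − ν⋆`, then every component of the reverse water-filling
minimizer is strictly positive: `λᵢ⋆ = 1/(ν⋆+γμᵢ) − 1/α > 0`. -/
theorem reverse_water_filling_no_collapse (d N : ℕ) (hm : 0 < min d N)
    (α γ : ℝ) (hα : 0 < α) (hγ : 0 < γ)
    (μ : Fin (min d N) → ℝ) (hμ : ∀ i, 0 ≤ μ i)
    (ν : ℝ) (hν : ∀ i, 0 < ν + γ * μ i)
    (hsum : ∑ i, max 0 (1 / (ν + γ * μ i) - 1 / α) = (N : ℝ))
    (hcond : γ * Finset.univ.sup' ⟨⟨0, hm⟩, Finset.mem_univ _⟩ μ < α - ν) :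
    ∀ i, max 0 (1 / (ν + γ * μ i) - 1 / α) = 1 / (ν + γ * μ i) - 1 / α ∧
      0 < 1 / (ν + γ * μ i) - 1 / α := by
  intro i
  have hle : μ i ≤ Finset.univ.sup' ⟨⟨0, hm⟩, Finset.mem_univ _⟩ μ :=
    Finset.le_sup' μ (Finset.mem_univ i)
  have h1 : ν + γ * μ i < α := by nlinarith
  have hpos : 0 < 1 / (ν + γ * μ i) - 1 / α := by
    have := hν i
    have : 1 / α < 1 / (ν + γ * μ i) := by
      apply one_div_lt_one_div_of_lt (hν i) h1
    linarith
  exact ⟨max_eq_right hpos.le, hpos⟩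
end

section
/- Let α, γ > 0, m = min{d,N}, μᵢ ≥ 0, and let ν⋆ be the optimal dual variable of the reverse water-filling problem (satisfying Σᵢ max{0, 1/(ν⋆+γμᵢ) − 1/α} = N and ν⋆ + γμᵢ > 0). If γ · max_i μᵢ < α²/(α + m/N), then γ · max_i μᵢ < α − ν⋆. -/
open Finset

/-- The explicit hyper-parameter condition `γ·maxᵢμᵢ < α²/(α + m/N)` implies the
noncollapse condition `γ·maxᵢμᵢ < α − ν⋆`, where `m = min{d,N}`. -/
theorem hyperparameter_condition_implies_no_collapse (d N : ℕ)
    (hm : 0 < min d N) (hN : 0 < N)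
    (α γ : ℝ) (hα : 0 < α) (hγ : 0 < γ)
    (μ : Fin (min d N) → ℝ) (hμ : ∀ i, 0 ≤ μ i)
    (ν : ℝ) (hν : ∀ i, 0 < ν + γ * μ i)
    (hsum : ∑ i, max 0 (1 / (ν + γ * μ i) - 1 / α) = (N : ℝ))
    (hcond : γ * Finset.univ.sup' ⟨⟨0, hm⟩, Finset.mem_univ _⟩ μ <
      α ^ 2 / (α + (min d N : ℕ) / (N : ℝ))) :
    γ * Finset.univ.sup' ⟨⟨0, hm⟩, Finset.mem_univ _⟩ μ < α - ν := by
  have hmR : (0:ℝ) < (min d N : ℕ) := by exact_mod_cast hm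
  have hNR : (0:ℝ) < (N : ℝ) := by exact_mod_cast hN
  suffices h : α ^ 2 / (α + (min d N : ℕ) / (N : ℝ)) ≤ α - ν by linarith
  rcases le_or_gt ν 0 with hν0 | hν0
  · have hc : (0:ℝ) ≤ ((min d N : ℕ) : ℝ) / N := by positivity
    rw [div_le_iff₀ (by positivity)]
    nlinarith
  · -- ν > 0
    have hterm : ∀ i ∈ Finset.univ, max 0 (1 / (ν + γ * μ i) - 1 / α)
        ≤ max 0 (1 / ν - 1 / α) := by
      intro i _
      apply max_le_max le_rfl
      have h1 : ν ≤ ν + γ * μ i := by nlinarith [hμ i]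
      gcongr
    have hsum2 : (N:ℝ) ≤ (min d N : ℕ) * max 0 (1 / ν - 1 / α) := by
      calc (N:ℝ) = ∑ i, max 0 (1 / (ν + γ * μ i) - 1 / α) := hsum.symm
        _ ≤ ∑ _i : Fin (min d N), max 0 (1 / ν - 1 / α) := Finset.sum_le_sum hterm
        _ = (min d N : ℕ) * max 0 (1 / ν - 1 / α) := by
            simp [Finset.sum_const, mul_comm]
    have hC : (N:ℝ) / (min d N : ℕ) ≤ 1 / ν - 1 / α := by
      have hmax : max 0 (1 / ν - 1 / α) = 1 / ν - 1 / α := by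
        rcases le_or_gt (1 / ν - 1 / α) 0 with h | h
        · exfalso
          rw [max_eq_left h, mul_zero] at hsum2
          linarith
        · exact max_eq_right h.le
      rw [hmax] at hsum2
      rw [div_le_iff₀ hmR]
      linarith
    have h2 : ν * ((N:ℝ) * α + (min d N : ℕ)) ≤ (min d N : ℕ) * α := by
      have hx : (N:ℝ) / (min d N : ℕ) + 1 / α ≤ 1 / ν := by linarith
      rw [div_add_div _ _ hmR.ne' hα.ne', div_le_div_iff₀ (by positivity) hν0] at hx
      nlinarith [hx]
    have key : α ^ 2 * (N:ℝ) ≤ (α - ν) * (α * N + (min d N : ℕ)) := by nlinarith [h2]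
    rw [div_le_iff₀ (by positivity)]
    have hrw : (α - ν) * (α + (min d N : ℕ) / (N:ℝ))
        = (α - ν) * (α * N + (min d N : ℕ)) / N := by
      field_simp
    rw [hrw, le_div_iff₀ hNR]
    linarith
end

section
/- Let M be symmetric PSD with eigenvalues μ₁,…,μ_N, and let ν, α, γ > 0 satisfy ν + γμᵢ > 0 for all i. Suppose G⋆ is symmetric PSD, shares an orthogonal eigenbasis with M, and has eigenvalue max{0, 1/(ν+γμᵢ) − 1/α} paired with the eigenvector of M for μᵢ. Then (α/2)(I + αG⋆)⁻¹ = (γ/2)M + (ν/2)I − Δ for some symmetric PSD matrix Δ with ΔG⋆ = 0, i.e., G⋆ satisfies the KKT stationarity and complementary slackness conditions of the SDP: min −½log det(I+αG) + (γ/2)Tr(GM) s.t. G ⪰ 0, Tr(G) fixed. -/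
open Matrix

/-- KKT certificate: if `G⋆` shares an orthogonal eigenbasis with `M` and has
eigenvalues `max{0, 1/(ν+γμᵢ) − 1/α}` paired with the eigenvalues `μᵢ` of `M`,
then there is a symmetric PSD dual matrix `Δ` with `ΔG⋆ = 0` and
`(α/2)(I+αG⋆)⁻¹ = (γ/2)M + (ν/2)I − Δ`. -/
theorem kkt_certificate (N : ℕ)
    (M : Matrix (Fin N) (Fin N) ℝ) (hMpsd : M.PosSemidef)
    (μ : Fin N → ℝ) (hμ : ∀ i, 0 ≤ μ i)
    (ν α γ : ℝ) (hν : 0 < ν) (hα : 0 < α) (hγ : 0 < γ)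
    (hpos : ∀ i, 0 < ν + γ * μ i)
    (U : Matrix (Fin N) (Fin N) ℝ) (hU : Uᵀ * U = 1)
    (hM : M = U * Matrix.diagonal μ * Uᵀ)
    (Gs : Matrix (Fin N) (Fin N) ℝ) (hGspsd : Gs.PosSemidef)
    (hGs : Gs = U * Matrix.diagonal
      (fun i => max 0 (1 / (ν + γ * μ i) - 1 / α)) * Uᵀ) :
    ∃ Δ : Matrix (Fin N) (Fin N) ℝ, Δ.PosSemidef ∧ Δ * Gs = 0 ∧
      (α / 2) • (1 + α • Gs)⁻¹ = (γ / 2) • M + (ν / 2) • (1 : Matrix (Fin N) (Fin N) ℝ) - Δ := by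
  set g : Fin N → ℝ := fun i => max 0 (1 / (ν + γ * μ i) - 1 / α) with hg
  have hUUT : U * Uᵀ = 1 := mul_eq_one_comm.mp hU
  have conj_mul : ∀ a b : Fin N → ℝ,
      (U * Matrix.diagonal a * Uᵀ) * (U * Matrix.diagonal b * Uᵀ)
        = U * Matrix.diagonal (fun i => a i * b i) * Uᵀ := by
    intro a b
    calc (U * Matrix.diagonal a * Uᵀ) * (U * Matrix.diagonal b * Uᵀ)
        = U * Matrix.diagonal a * (Uᵀ * U) * Matrix.diagonal b * Uᵀ := by
          simp only [Matrix.mul_assoc]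
      _ = U * (Matrix.diagonal a * Matrix.diagonal b) * Uᵀ := by
          rw [hU]; simp only [Matrix.mul_one, Matrix.mul_assoc]
      _ = _ := by rw [Matrix.diagonal_mul_diagonal]
  have smul_conj : ∀ (r : ℝ) (d : Fin N → ℝ),
      r • (U * Matrix.diagonal d * Uᵀ) = U * Matrix.diagonal (fun i => r * d i) * Uᵀ := by
    intro r d
    rw [show (fun i => r * d i) = r • d from rfl, Matrix.diagonal_smul,
      Matrix.mul_smul, Matrix.smul_mul]
  have add_conj : ∀ a b : Fin N → ℝ,
      (U * Matrix.diagonal a * Uᵀ) + (U * Matrix.diagonal b * Uᵀ)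
        = U * Matrix.diagonal (fun i => a i + b i) * Uᵀ := by
    intro a b
    rw [← Matrix.diagonal_add, Matrix.mul_add, Matrix.add_mul]
  have sub_conj : ∀ a b : Fin N → ℝ,
      (U * Matrix.diagonal a * Uᵀ) - (U * Matrix.diagonal b * Uᵀ)
        = U * Matrix.diagonal (fun i => a i - b i) * Uᵀ := by
    intro a b
    rw [← Matrix.diagonal_sub, Matrix.mul_sub, Matrix.sub_mul]
  have hgnn : ∀ i, 0 ≤ g i := fun i => le_max_left _ _
  have h1ag : ∀ i, 0 < 1 + α * g i := fun i => by positivity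
  set δ : Fin N → ℝ := fun i => (ν + γ * μ i) / 2 - (α / 2) / (1 + α * g i) with hδ
  have hδzero : ∀ i, 0 < 1 / (ν + γ * μ i) - 1 / α → δ i = 0 := by
    intro i h
    have hg0 : g i = 1 / (ν + γ * μ i) - 1 / α := max_eq_right h.le
    have hp := hpos i
    have h1 : 1 + α * g i = α / (ν + γ * μ i) := by
      rw [hg0]; field_simp; ring
    simp only [hδ, h1]
    field_simp
    ring
  have hδnn : ∀ i, 0 ≤ δ i := by
    intro i
    rcases le_or_gt (1 / (ν + γ * μ i) - 1 / α) 0 with h | h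
    · have hg0 : g i = 0 := max_eq_left h
      have : α ≤ ν + γ * μ i := by
        have := sub_nonpos.mp h
        rw [div_le_div_iff₀ (hpos i) hα] at this
        linarith
      simp only [hδ, hg0, mul_zero, add_zero, div_one]
      linarith
    · exact le_of_eq (hδzero i h).symm
  have hδg : ∀ i, δ i * g i = 0 := by
    intro i
    rcases le_or_gt (1 / (ν + γ * μ i) - 1 / α) 0 with h | h
    · have hg0 : g i = 0 := max_eq_left h
      rw [hg0, mul_zero]
    · rw [hδzero i h, zero_mul]
  refine ⟨U * Matrix.diagonal δ * Uᵀ, ?_, ?_, ?_⟩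
  · exact PosSemidef.mul_mul_conjTranspose_same
      (Matrix.posSemidef_diagonal_iff.mpr fun i => hδnn i) U
  · rw [hGs, conj_mul]
    have : (fun i => δ i * g i) = fun _ => (0 : ℝ) := funext hδg
    rw [this]
    simp
  · have h1 : (1 : Matrix (Fin N) (Fin N) ℝ) = U * Matrix.diagonal (fun _ => (1:ℝ)) * Uᵀ := by
      simp [hUUT]
    have hsum : 1 + α • Gs = U * Matrix.diagonal (fun i => 1 + α * g i) * Uᵀ := by
      rw [h1, hGs, smul_conj, add_conj]
    have hinv : (1 + α • Gs)⁻¹ = U * Matrix.diagonal (fun i => (1 + α * g i)⁻¹) * Uᵀ := by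
      apply Matrix.inv_eq_right_inv
      rw [hsum, conj_mul]
      have : (fun i => (1 + α * g i) * (1 + α * g i)⁻¹) = fun _ => (1:ℝ) := by
        funext i; exact mul_inv_cancel₀ (h1ag i).ne'
      rw [this, ← h1]
    rw [hinv, hM, h1, smul_conj, smul_conj, smul_conj, add_conj, sub_conj]
    congr 2
    rw [Matrix.diagonal_eq_diagonal_iff]
    intro i
    simp only [hδ]
    have := h1ag i
    field_simp
    ring
end
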